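/- Let (X, 𝔄, μ) be a σ-finite measure space, c > 0, and A : L²(μ;ℂ) → L²(μ;ℂ) a bounded linear operator such that for every f ∈ L²(μ), the image Af has an essentially bounded representative with essential supremum at most c·‖f‖_{L²}. Let m ∈ L²(μ). Then for every orthonormal sequence (eᵢ)_{i∈ℕ} in L²(μ) one has Σ_{i=1}^∞ ∫_X |m(x)|²·|(A eᵢ)(x)|² dμ(x) ≤ c²·∫_X |m(x)|² dμ(x); in particular, the operator f ↦ m·(Af) is Hilbert–Schmidt. -/

import Mathlib

/-!
Since `A` is linear and `‖(A f)(x)‖ ≤ c ‖f‖` a.e., for a finite orthonormal family `(eᵢ)` and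
coefficients `a` one gets `|∑ aᵢ (A eᵢ)(x)| ≤ c (∑ |aᵢ|²)^{1/2}` a.e.; by continuity in `a` and
separability of the coefficient space this holds for all `a` simultaneously off a single null
set, and choosing `aᵢ = conj (A eᵢ)(x)` gives the pointwise Bessel bound `∑ |(A eᵢ)(x)|² ≤ c²`.
Multiplying by `|m|²` and integrating bounds every finite partial sum by `c² ∫ |m|²`.
-/

open MeasureTheory

section

variable {𝕜 : Type*} [RCLike 𝕜]

theorem Orthonormal.norm_sum_smul_sq {E ι : Type*} [NormedAddCommGroup E] [InnerProductSpace 𝕜 E]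
    [Fintype ι] {e : ι → E} (he : Orthonormal 𝕜 e) (a : ι → 𝕜) :
    ‖∑ i, a i • e i‖ ^ 2 = ∑ i, ‖a i‖ ^ 2 := by
  have h := he.inner_sum a a Finset.univ
  simp only [RCLike.conj_mul, inner_self_eq_norm_sq_to_K] at h
  exact_mod_cast h

theorem MeasureTheory.ae_forall_of_isClosed {X α : Type*} [MeasurableSpace X] {μ : Measure X}
    [TopologicalSpace α] [TopologicalSpace.SeparableSpace α] {p : α → X → Prop}
    (hp : ∀ x, IsClosed {a | p a x}) (h : ∀ a, ∀ᵐ x ∂μ, p a x) : ∀ᵐ x ∂μ, ∀ a, p a x := by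
  obtain ⟨D, hD, hDense⟩ := TopologicalSpace.exists_countable_dense α
  filter_upwards [(ae_ball_iff hD).2 fun a _ => h a] with x hx a
  exact closure_minimal (fun b hb => hx b hb) (hp x) (hDense a)

theorem sum_norm_sq_le_of_norm_sum_mul_sq_le {ι : Type*} [Fintype ι] (w : ι → 𝕜) (c : ℝ)
    (h : ∀ a : ι → 𝕜, ‖∑ i, a i * w i‖ ^ 2 ≤ c ^ 2 * ∑ i, ‖a i‖ ^ 2) :
    ∑ i, ‖w i‖ ^ 2 ≤ c ^ 2 := by
  set S := ∑ i, ‖w i‖ ^ 2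
  have hS : 0 ≤ S := by positivity
  have hconj : S ^ 2 ≤ c ^ 2 * S := by
    have := h fun i => starRingEnd 𝕜 (w i)
    simp only [RCLike.conj_mul, RCLike.norm_conj] at this
    norm_cast at this
    rwa [sq_abs] at this
  rcases hS.eq_or_lt with hS0 | hSpos
  · rw [← hS0]
    positivity
  · exact le_of_mul_le_mul_right (by rwa [← sq]) hSpos

theorem ae_sum_norm_sq_apply_le {X E ι : Type*} [MeasurableSpace X] {μ : Measure X}
    [NormedAddCommGroup E] [InnerProductSpace 𝕜 E] [Fintype ι] {p : ENNReal} [Fact (1 ≤ p)]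
    (A : E →L[𝕜] Lp 𝕜 p μ) (c : ℝ) (hA : ∀ f, ∀ᵐ x ∂μ, ‖A f x‖ ≤ c * ‖f‖)
    {e : ι → E} (he : Orthonormal 𝕜 e) : ∀ᵐ x ∂μ, ∑ i, ‖A (e i) x‖ ^ 2 ≤ c ^ 2 := by
  have hclosed : ∀ x, IsClosed
      {a : ι → 𝕜 | ‖∑ i, a i * A (e i) x‖ ^ 2 ≤ c ^ 2 * ∑ i, ‖a i‖ ^ 2} := fun x =>
    isClosed_le (by fun_prop) (by fun_prop)
  refine (ae_forall_of_isClosed hclosed fun a => ?_).mono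
    fun x hx => sum_norm_sq_le_of_norm_sum_mul_sq_le _ c hx
  have hcoe : ⇑(A (∑ i, a i • e i)) =ᵐ[μ] fun x => ∑ i, a i * A (e i) x := by
    have hlin : A (∑ i, a i • e i) = ∑ i, a i • A (e i) := by
      rw [map_sum]
      exact Finset.sum_congr rfl fun i _ => A.map_smul (a i) (e i)
    rw [hlin]
    filter_upwards [Lp.coeFn_fun_finsetSum Finset.univ fun i => a i • A (e i),
      ae_all_iff.2 fun i => Lp.coeFn_smul (a i) (A (e i))] with x hsum hsmul
    rw [hsum]
    exact Finset.sum_congr rfl fun i _ => hsmul i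
  filter_upwards [hA (∑ i, a i • e i), hcoe] with x hx hx'
  rw [← hx', ← he.norm_sum_smul_sq a, ← mul_pow]
  exact pow_le_pow_left₀ (norm_nonneg _) hx 2

theorem tsum_integral_mul_norm_sq_le {X ι : Type*} [MeasurableSpace X] {μ : Measure X}
    {g : X → ℝ} (hg : Integrable g μ) (hg0 : 0 ≤ g) {v : ι → X → 𝕜}
    (hv : ∀ i, AEStronglyMeasurable (v i) μ) {C : ℝ}
    (h : ∀ s : Finset ι, ∀ᵐ x ∂μ, ∑ i ∈ s, ‖v i x‖ ^ 2 ≤ C) :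
    ∑' i, ∫ x, g x * ‖v i x‖ ^ 2 ∂μ ≤ C * ∫ x, g x ∂μ := by
  have hint : ∀ i, Integrable (fun x => g x * ‖v i x‖ ^ 2) μ := fun i => by
    refine (hg.const_mul C).mono (hg.aestronglyMeasurable.mul ((hv i).norm.pow 2)) ?_
    have hi : ∀ᵐ x ∂μ, ‖v i x‖ ^ 2 ≤ C := by simpa using h {i}
    filter_upwards [hi] with x hx
    calc ‖g x * ‖v i x‖ ^ 2‖ = g x * ‖v i x‖ ^ 2 :=
          Real.norm_of_nonneg (mul_nonneg (hg0 x) (sq_nonneg _))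
      _ ≤ C * g x := by rw [mul_comm]; exact mul_le_mul_of_nonneg_right hx (hg0 x)
      _ ≤ ‖C * g x‖ := Real.le_norm_self _
  refine Real.tsum_le_of_sum_le
    (fun i => integral_nonneg fun x => mul_nonneg (hg0 x) (sq_nonneg _)) fun s => ?_
  rw [← integral_finsetSum s fun i _ => hint i, ← integral_const_mul]
  refine integral_mono_ae (integrable_finsetSum s fun i _ => hint i) (hg.const_mul C) ?_
  filter_upwards [h s] with x hx
  rw [← Finset.mul_sum, mul_comm]
  exact mul_le_mul_of_nonneg_right hx (hg0 x)

end

theorem hilbert_schmidt_bound_general {X : Type*} [MeasurableSpace X] (μ : Measure X)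
    (c : ℝ)
    (A : Lp ℂ 2 μ →L[ℂ] Lp ℂ 2 μ)
    (hA : ∀ f : Lp ℂ 2 μ, ∀ᵐ x ∂μ, ‖(A f : Lp ℂ 2 μ) x‖ ≤ c * ‖f‖)
    (m : X → ℂ) (hm : MemLp m 2 μ) :
    ∀ e : ℕ → Lp ℂ 2 μ, Orthonormal ℂ e →
      ∑' i : ℕ, ∫ x, ‖m x‖ ^ 2 * ‖(A (e i) : Lp ℂ 2 μ) x‖ ^ 2 ∂μ
        ≤ c ^ 2 * ∫ x, ‖m x‖ ^ 2 ∂μ := by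
  intro e he
  refine tsum_integral_mul_norm_sq_le hm.norm.integrable_sq (fun x => sq_nonneg _)
    (fun i => Lp.aestronglyMeasurable _) fun s => ?_
  filter_upwards [ae_sum_norm_sq_apply_le A c hA (he.comp ((↑) : s → ℕ) Subtype.val_injective)]
    with x hx
  exact (Finset.sum_coe_sort s fun i => ‖A (e i) x‖ ^ 2) ▸ hx

/-- **Hilbert–Schmidt bound for a weighted L²→L^∞ bounded operator.** If
`A : L²(μ) → L²(μ)` satisfies `‖A f‖_∞ ≤ c ‖f‖₂` and `m ∈ L²(μ)`, then for every
orthonormal sequence `(eᵢ)`, `Σᵢ ∫ |m|² |A eᵢ|² dμ ≤ c² ∫ |m|² dμ`. -/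
theorem hilbert_schmidt_bound {X : Type*} [MeasurableSpace X] (μ : Measure X)
    [SigmaFinite μ] (c : ℝ) (hc : 0 < c)
    (A : Lp ℂ 2 μ →L[ℂ] Lp ℂ 2 μ)
    (hA : ∀ f : Lp ℂ 2 μ, ∀ᵐ x ∂μ, ‖(A f : Lp ℂ 2 μ) x‖ ≤ c * ‖f‖)
    (m : X → ℂ) (hm : MemLp m 2 μ) :
    ∀ e : ℕ → Lp ℂ 2 μ, Orthonormal ℂ e →
      ∑' i : ℕ, ∫ x, ‖m x‖ ^ 2 * ‖(A (e i) : Lp ℂ 2 μ) x‖ ^ 2 ∂μ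
        ≤ c ^ 2 * ∫ x, ‖m x‖ ^ 2 ∂μ :=
  hilbert_schmidt_bound_general μ c A hA m hm
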